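/- arXiv:2311.15352 — 3 statements merged into one kernel-verified Lean document; each statement's English description precedes it below -/
import Mathlib

section
/- For every continuously differentiable function f : [0,1] → ℝ one has sup_{x∈[0,1]} |f(x)|² ≤ (tanh 1)⁻¹ · ( ∫₀¹ f(x)² dx + ∫₀¹ f'(x)² dx ). In other words, the Sobolev embedding W^{1,2}([0,1]) ↪ C([0,1]) holds with embedding constant tanh(1)^{-1/2}. -/
/-!
If `h' + h² ≤ 1`, then `(f² h)' = 2 f f' h + f² h' ≤ f² + f'²`, the difference being
`(f' - f h)² + f² (1 - h' - h²)`. Integrating this with `h = tanh` over `[0, x₀]` and with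
`h = -tanh (1 - ·)` over `[x₀, 1]` (both solve `h' + h² = 1` and vanish at the outer endpoint)
gives `f(x₀)² (tanh x₀ + tanh (1 - x₀)) ≤ ∫₀¹ f² + f'²`, and `tanh` is subadditive on `[0, ∞)`.
-/

open MeasureTheory Set Real

theorem Real.hasDerivAt_tanh (x : ℝ) : HasDerivAt tanh (1 - tanh x ^ 2) x := by
  have hc := (cosh_pos x).ne'
  have h := (hasDerivAt_sinh x).div (hasDerivAt_cosh x) hc
  rw [show tanh = sinh / cosh from funext tanh_eq_sinh_div_cosh]
  refine h.congr_deriv ?_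
  simp only [Pi.div_apply]
  field_simp

theorem Real.tanh_pos {x : ℝ} (hx : 0 < x) : 0 < tanh x := by
  rw [tanh_eq_sinh_div_cosh]
  exact div_pos (sinh_pos_iff.2 hx) (cosh_pos x)

theorem Real.tanh_add_le {a b : ℝ} (ha : 0 ≤ a) (hb : 0 ≤ b) :
    tanh (a + b) ≤ tanh a + tanh b := by
  have sa := sinh_nonneg_iff.2 ha
  have sb := sinh_nonneg_iff.2 hb
  have ca := cosh_pos a
  have cb := cosh_pos b
  simp only [tanh_eq_sinh_div_cosh, sinh_add, cosh_add]
  rw [div_add_div _ _ ca.ne' cb.ne']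
  exact div_le_div_of_nonneg_left (by positivity) (by positivity) (by nlinarith [mul_nonneg sa sb])

theorem sq_mul_sub_sq_mul_le_integral_of_riccati_le {f f' h h' : ℝ → ℝ} {a b : ℝ}
    (hab : a ≤ b)
    (hf : ContinuousOn f (Icc a b)) (hf' : ∀ x ∈ Ioo a b, HasDerivAt f (f' x) x)
    (hh : ContinuousOn h (Icc a b)) (hh' : ∀ x ∈ Ioo a b, HasDerivAt h (h' x) x)
    (hric : ∀ x ∈ Ioo a b, h' x + h x ^ 2 ≤ 1)
    (hint : IntegrableOn (fun x => f x ^ 2 + f' x ^ 2) (Icc a b)) :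
    f b ^ 2 * h b - f a ^ 2 * h a ≤ ∫ x in a..b, f x ^ 2 + f' x ^ 2 := by
  refine intervalIntegral.sub_le_integral_of_hasDeriv_right_of_le hab ((hf.pow 2).mul hh)
    (fun x hx => (((hf' x hx).pow 2).mul (hh' x hx)).hasDerivWithinAt) hint fun x hx => ?_
  have := hric x hx
  simp only [Pi.pow_apply]
  norm_num
  nlinarith [sq_nonneg (f' x - f x * h x), mul_nonneg (sq_nonneg (f x)) (sub_nonneg.2 this)]

theorem sq_mul_tanh_one_le_integral {f f' : ℝ → ℝ} (hf : ContinuousOn f (Icc 0 1))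
    (hf' : ∀ x ∈ Ioo 0 1, HasDerivAt f (f' x) x)
    (hint : IntegrableOn (fun x => f x ^ 2 + f' x ^ 2) (Icc 0 1))
    {x₀ : ℝ} (hx₀ : x₀ ∈ Icc 0 1) :
    f x₀ ^ 2 * tanh 1 ≤ ∫ x in (0:ℝ)..1, f x ^ 2 + f' x ^ 2 := by
  obtain ⟨h0, h1⟩ := hx₀
  have hleft : Icc 0 x₀ ⊆ Icc (0:ℝ) 1 := Icc_subset_Icc_right h1
  have hright : Icc x₀ 1 ⊆ Icc (0:ℝ) 1 := Icc_subset_Icc_left h0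
  have hleft_le : f x₀ ^ 2 * tanh x₀ ≤ ∫ x in (0:ℝ)..x₀, f x ^ 2 + f' x ^ 2 := by
    simpa using sq_mul_sub_sq_mul_le_integral_of_riccati_le h0 (hf.mono hleft)
      (fun x hx => hf' x (Ioo_subset_Ioo_right h1 hx))
      (fun x _ => (hasDerivAt_tanh x).continuousAt.continuousWithinAt)
      (fun x _ => hasDerivAt_tanh x) (fun x _ => (sub_add_cancel _ _).le) (hint.mono_set hleft)
  have hright_le : f x₀ ^ 2 * tanh (1 - x₀) ≤ ∫ x in x₀..1, f x ^ 2 + f' x ^ 2 := by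
    have hh : ∀ x, HasDerivAt (fun y => -tanh (1 - y)) (1 - tanh (1 - x) ^ 2) x := fun x => by
      have := ((hasDerivAt_tanh (1 - x)).comp x ((hasDerivAt_id x).const_sub 1)).fun_neg
      exact this.congr_deriv (by ring)
    simpa using sq_mul_sub_sq_mul_le_integral_of_riccati_le h1 (hf.mono hright)
      (fun x hx => hf' x (Ioo_subset_Ioo_left h0 hx))
      (fun x _ => (hh x).continuousAt.continuousWithinAt)
      (fun x _ => hh x) (fun x _ => by rw [neg_sq, sub_add_cancel]) (hint.mono_set hright)
  calc f x₀ ^ 2 * tanh 1 ≤ f x₀ ^ 2 * (tanh x₀ + tanh (1 - x₀)) := by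
        have := tanh_add_le h0 (sub_nonneg.2 h1)
        rw [add_sub_cancel] at this
        gcongr
    _ ≤ _ := by
      have hsplit := intervalIntegral.integral_add_adjacent_intervals
        (hint.mono_set (uIcc_of_le h0 ▸ hleft)).intervalIntegrable
        (hint.mono_set (uIcc_of_le h1 ▸ hright)).intervalIntegrable
      linarith

/-- Sobolev embedding `W^{1,2}([0,1]) ↪ C([0,1])` with Marti's optimal
constant `tanh(1)^{-1/2}`: for every continuously differentiable `f : [0,1] → ℝ`,
`sup_{x∈[0,1]} |f(x)|² ≤ (tanh 1)⁻¹ (∫₀¹ f² + ∫₀¹ f'²)`. -/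
theorem stmt_1 (f f' : ℝ → ℝ)
    (hf : ∀ x ∈ Set.Icc (0:ℝ) 1, HasDerivWithinAt f (f' x) (Set.Icc 0 1) x)
    (hf' : ContinuousOn f' (Set.Icc 0 1)) :
    (⨆ x ∈ Set.Icc (0:ℝ) 1, |f x| ^ 2)
      ≤ (Real.tanh 1)⁻¹ *
        ((∫ x in Set.Icc (0:ℝ) 1, f x ^ 2) + ∫ x in Set.Icc (0:ℝ) 1, f' x ^ 2) := by
  have hfc : ContinuousOn f (Icc 0 1) := fun x hx => (hf x hx).continuousWithinAt
  have hderiv : ∀ x ∈ Ioo (0:ℝ) 1, HasDerivAt f (f' x) x := fun x hx =>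
    (hf x (Ioo_subset_Icc_self hx)).hasDerivAt (Icc_mem_nhds hx.1 hx.2)
  have hint_f : IntegrableOn (fun x => f x ^ 2) (Icc 0 1) := (hfc.pow 2).integrableOn_Icc
  have hint_f' : IntegrableOn (fun x => f' x ^ 2) (Icc 0 1) := (hf'.pow 2).integrableOn_Icc
  have hnorm : (∫ x in Icc (0:ℝ) 1, f x ^ 2) + ∫ x in Icc (0:ℝ) 1, f' x ^ 2
      = ∫ x in (0:ℝ)..1, f x ^ 2 + f' x ^ 2 := by
    rw [intervalIntegral.integral_of_le zero_le_one, ← integral_Icc_eq_integral_Ioc,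
      integral_add hint_f hint_f']
  have hbound : ∀ x ∈ Icc (0:ℝ) 1,
      |f x| ^ 2 ≤ (tanh 1)⁻¹ * ∫ x in (0:ℝ)..1, f x ^ 2 + f' x ^ 2 := fun x hx => by
      rw [sq_abs, inv_mul_eq_div, le_div_iff₀ (tanh_pos one_pos)]
      exact sq_mul_tanh_one_le_integral hfc hderiv (hint_f.add hint_f') hx
  rw [hnorm]
  have hbound_nonneg := (sq_nonneg _).trans (hbound 0 (left_mem_Icc.2 zero_le_one))
  exact Real.iSup_le (fun x => Real.iSup_le (hbound x) hbound_nonneg) hbound_nonneg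
end

section
/- Let μ be a finite signed measure on the Borel σ-algebra of [0,1] with total variation M = |μ|([0,1]), and let f : [0,1] → ℝ be continuously differentiable. Then ( ∫_{[0,1]} f(z) μ(dz) )² ≤ M² · (tanh 1)⁻¹ · ( ∫₀¹ f(x)² dx + ∫₀¹ f'(x)² dx ). -/
/-!
For `x ∈ [a, b]`, differentiating `f² tanh (t - a)` on `[a, x]` and `-f² tanh (b - t)` on `[x, b]`
and using `tanh' = 1 - tanh²` gives derivatives bounded by `f² + f'²` (the difference is a square),
so `f(x)² (tanh (x - a) + tanh (b - x)) ≤ ∫ₐᵇ (f² + f'²)`. Subadditivity of `tanh` on `[0, ∞)`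
turns this into the sup bound `f(x)² tanh (b - a) ≤ ∫ₐᵇ (f² + f'²)`, and integrating a function
bounded by `C` against `μ` gives at most `C |μ|([0, 1])`.
-/

open MeasureTheory Set

namespace Real

lemma hasDerivAt_tanh_s2 (x : ℝ) : HasDerivAt tanh (1 - tanh x ^ 2) x := by
  have h := (hasDerivAt_sinh x).div (hasDerivAt_cosh x) (cosh_pos x).ne'
  rw [show sinh / cosh = tanh from funext fun y => (tanh_eq_sinh_div_cosh y).symm] at h
  refine h.congr_deriv ?_
  rw [tanh_eq_sinh_div_cosh]
  field_simp

lemma continuous_tanh : Continuous tanh :=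
  continuous_iff_continuousAt.2 fun x => (hasDerivAt_tanh_s2 x).continuousAt

lemma tanh_pos_s2 {x : ℝ} (hx : 0 < x) : 0 < tanh x := by
  rw [tanh_eq_sinh_div_cosh]
  exact div_pos (sinh_pos_iff.2 hx) (cosh_pos x)

lemma tanh_add_le_s2 {a b : ℝ} (ha : 0 ≤ a) (hb : 0 ≤ b) : tanh (a + b) ≤ tanh a + tanh b := by
  have hsum : tanh a + tanh b = sinh (a + b) / (cosh a * cosh b) := by
    rw [tanh_eq_sinh_div_cosh, tanh_eq_sinh_div_cosh, sinh_add]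
    field_simp [(cosh_pos a).ne', (cosh_pos b).ne']
  have hcosh : cosh a * cosh b ≤ cosh (a + b) := by
    rw [cosh_add]
    nlinarith [sinh_nonneg_iff.2 ha, sinh_nonneg_iff.2 hb]
  rw [hsum, tanh_eq_sinh_div_cosh]
  exact div_le_div_of_nonneg_left (sinh_nonneg_iff.2 (add_nonneg ha hb))
    (mul_pos (cosh_pos a) (cosh_pos b)) hcosh

end Real

open Real

section SobolevTanh

variable {f f' : ℝ → ℝ} {a b : ℝ}

lemma sq_mul_tanh_le_integral_right (hab : a ≤ b) (hf : ContinuousOn f (Icc a b))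
    (hderiv : ∀ x ∈ Ioo a b, HasDerivAt f (f' x) x)
    (hf' : IntervalIntegrable (fun t => f' t ^ 2) volume a b) :
    f b ^ 2 * tanh (b - a) ≤ ∫ t in a..b, (f t ^ 2 + f' t ^ 2) := by
  have hg : ∀ t ∈ Ioo a b, HasDerivAt (fun s => f s ^ 2 * tanh (s - a))
      (2 * f t * f' t * tanh (t - a) + f t ^ 2 * (1 - tanh (t - a) ^ 2)) t := fun t ht =>
    (((hderiv t ht).fun_pow 2).mul ((hasDerivAt_tanh_s2 (t - a)).comp_sub_const t a)).congr_deriv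
      (by norm_num)
  have hint : IntegrableOn (fun t => f t ^ 2 + f' t ^ 2) (Icc a b) :=
    (intervalIntegrable_iff_integrableOn_Icc_of_le hab).1
      (((hf.pow 2).intervalIntegrable_of_Icc hab).add hf')
  have key := intervalIntegral.sub_le_integral_of_hasDeriv_right_of_le hab
    (g := fun t => f t ^ 2 * tanh (t - a))
    ((hf.pow 2).mul (continuous_tanh.comp (continuous_sub_right a)).continuousOn)
    (fun t ht => (hg t ht).hasDerivWithinAt) hint
    -- `f² + f'² - g' = (f' - f tanh (t - a))²`
    (fun t _ => by nlinarith [sq_nonneg (f' t - f t * tanh (t - a))])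
  simpa using key

lemma sq_mul_tanh_le_integral_left (hab : a ≤ b) (hf : ContinuousOn f (Icc a b))
    (hderiv : ∀ x ∈ Ioo a b, HasDerivAt f (f' x) x)
    (hf' : IntervalIntegrable (fun t => f' t ^ 2) volume a b) :
    f a ^ 2 * tanh (b - a) ≤ ∫ t in a..b, (f t ^ 2 + f' t ^ 2) := by
  -- the right-endpoint bound for `t ↦ f (-t)` on `[-b, -a]`
  have hreflect := sq_mul_tanh_le_integral_right
    (f := fun t => f (-t)) (f' := fun t => -f' (-t)) (neg_le_neg hab)
    (hf.comp continuous_neg.continuousOn fun t ht => ⟨le_neg.2 ht.2, neg_le.2 ht.1⟩)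
    (fun t ht => ((hderiv (-t) ⟨lt_neg.2 ht.2, neg_lt.2 ht.1⟩).comp t
      (hasDerivAt_neg' t)).congr_deriv (mul_neg_one _))
    (by simpa using ((IntervalIntegrable.iff_comp_neg).1 hf').symm)
  simpa [neg_add_eq_sub, intervalIntegral.integral_comp_neg (fun t => f t ^ 2 + f' t ^ 2)]
    using hreflect

lemma sq_mul_tanh_le_integral (hf : ContinuousOn f (Icc a b))
    (hderiv : ∀ x ∈ Ioo a b, HasDerivAt f (f' x) x)
    (hf' : IntervalIntegrable (fun t => f' t ^ 2) volume a b) {x : ℝ} (hx : x ∈ Icc a b) :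
    f x ^ 2 * tanh (b - a) ≤ ∫ t in a..b, (f t ^ 2 + f' t ^ 2) := by
  have hxu : x ∈ uIcc a b := Icc_subset_uIcc hx
  have hleft := sq_mul_tanh_le_integral_right hx.1 (hf.mono (Icc_subset_Icc_right hx.2))
    (fun t ht => hderiv t (Ioo_subset_Ioo_right hx.2 ht))
    (hf'.mono_set (uIcc_subset_uIcc left_mem_uIcc hxu))
  have hright := sq_mul_tanh_le_integral_left hx.2 (hf.mono (Icc_subset_Icc_left hx.1))
    (fun t ht => hderiv t (Ioo_subset_Ioo_left hx.1 ht))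
    (hf'.mono_set (uIcc_subset_uIcc hxu right_mem_uIcc))
  have hint : IntervalIntegrable (fun t => f t ^ 2 + f' t ^ 2) volume a b :=
    ((hf.pow 2).intervalIntegrable_of_Icc (hx.1.trans hx.2)).add hf'
  have htanh : tanh (b - a) ≤ tanh (x - a) + tanh (b - x) := by
    simpa using tanh_add_le_s2 (sub_nonneg.2 hx.1) (sub_nonneg.2 hx.2)
  calc f x ^ 2 * tanh (b - a) ≤ f x ^ 2 * tanh (x - a) + f x ^ 2 * tanh (b - x) := by
        rw [← mul_add]; exact mul_le_mul_of_nonneg_left htanh (sq_nonneg _)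
    _ ≤ (∫ t in a..x, (f t ^ 2 + f' t ^ 2)) + ∫ t in x..b, (f t ^ 2 + f' t ^ 2) :=
        add_le_add hleft hright
    _ = ∫ t in a..b, (f t ^ 2 + f' t ^ 2) :=
        intervalIntegral.integral_add_adjacent_intervals
          (hint.mono_set (uIcc_subset_uIcc left_mem_uIcc hxu))
          (hint.mono_set (uIcc_subset_uIcc hxu right_mem_uIcc))

end SobolevTanh

lemma MeasureTheory.SignedMeasure.abs_setIntegral_posPart_sub_negPart_le {α : Type*}
    [MeasurableSpace α] (μ : SignedMeasure α) {s : Set α} {f : α → ℝ} {C : ℝ}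
    (hf : ∀ x ∈ s, |f x| ≤ C) :
    |(∫ x in s, f x ∂μ.toJordanDecomposition.posPart)
        - ∫ x in s, f x ∂μ.toJordanDecomposition.negPart|
      ≤ C * (μ.totalVariation s).toReal := by
  have hpos := norm_setIntegral_le_of_norm_le_const
    (measure_lt_top μ.toJordanDecomposition.posPart s) (f := f) hf
  have hneg := norm_setIntegral_le_of_norm_le_const
    (measure_lt_top μ.toJordanDecomposition.negPart s) (f := f) hf
  rw [SignedMeasure.totalVariation, Measure.add_apply,
    ENNReal.toReal_add (measure_ne_top _ _) (measure_ne_top _ _)]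
  simp only [Real.norm_eq_abs, measureReal_def] at hpos hneg
  calc _ ≤ _ := abs_sub _ _
    _ ≤ _ := add_le_add hpos hneg
    _ = _ := by ring

theorem stmt_2_general (μ : MeasureTheory.SignedMeasure ℝ)
    (M : ℝ) (hM : M = (μ.totalVariation (Set.Icc 0 1)).toReal)
    (f f' : ℝ → ℝ)
    (hf : ∀ x ∈ Set.Icc (0:ℝ) 1, HasDerivWithinAt f (f' x) (Set.Icc 0 1) x)
    (hf' : ContinuousOn f' (Set.Icc 0 1)) :
    ((∫ z in Set.Icc (0:ℝ) 1, f z ∂μ.toJordanDecomposition.posPart)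
        - ∫ z in Set.Icc (0:ℝ) 1, f z ∂μ.toJordanDecomposition.negPart) ^ 2
      ≤ M ^ 2 * (Real.tanh 1)⁻¹ *
        ((∫ x in Set.Icc (0:ℝ) 1, f x ^ 2) + ∫ x in Set.Icc (0:ℝ) 1, f' x ^ 2) := by
  set E := (∫ x in Set.Icc (0:ℝ) 1, f x ^ 2) + ∫ x in Set.Icc (0:ℝ) 1, f' x ^ 2
  have hfc : ContinuousOn f (Icc 0 1) := fun x hx => (hf x hx).continuousWithinAt
  have hE : ∫ t in (0:ℝ)..1, (f t ^ 2 + f' t ^ 2) = E := by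
    rw [intervalIntegral.integral_of_le zero_le_one, ← integral_Icc_eq_integral_Ioc,
      integral_add (hfc.fun_pow 2).integrableOn_Icc (hf'.fun_pow 2).integrableOn_Icc]
  have hsup : ∀ x ∈ Icc (0:ℝ) 1, f x ^ 2 ≤ (tanh 1)⁻¹ * E := fun x hx => by
    rw [le_inv_mul_iff₀ (tanh_pos_s2 one_pos), mul_comm, ← hE]
    simpa using sq_mul_tanh_le_integral hfc
      (fun t ht => (hf t (Ioo_subset_Icc_self ht)).hasDerivAt (Icc_mem_nhds ht.1 ht.2))
      ((hf'.pow 2).intervalIntegrable_of_Icc zero_le_one) hx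
  have hE_nonneg : 0 ≤ (tanh 1)⁻¹ * E :=
    (sq_nonneg _).trans (hsup 0 (left_mem_Icc.2 zero_le_one))
  have hbound := SignedMeasure.abs_setIntegral_posPart_sub_negPart_le μ
    fun x hx => abs_le_sqrt (hsup x hx)
  rw [← hM] at hbound
  calc _ ≤ (√((tanh 1)⁻¹ * E) * M) ^ 2 := sq_le_sq' (abs_le.1 hbound).1 (abs_le.1 hbound).2
    _ = _ := by rw [mul_pow, sq_sqrt hE_nonneg]; ring

/-- For a finite signed measure `μ` on the Borel σ-algebra of `[0,1]`
with total variation `M = |μ|([0,1])` and a continuously differentiable `f : [0,1] → ℝ`,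
`(∫_{[0,1]} f dμ)² ≤ M² (tanh 1)⁻¹ (∫₀¹ f² + ∫₀¹ f'²)`.
The integral of `f` against `μ` is expressed through the Jordan decomposition. -/
theorem stmt_2 (μ : MeasureTheory.SignedMeasure ℝ)
    (hμ : ∀ s : Set ℝ, MeasurableSet s → μ s = μ (s ∩ Set.Icc 0 1))
    (M : ℝ) (hM : M = (μ.totalVariation (Set.Icc 0 1)).toReal)
    (f f' : ℝ → ℝ)
    (hf : ∀ x ∈ Set.Icc (0:ℝ) 1, HasDerivWithinAt f (f' x) (Set.Icc 0 1) x)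
    (hf' : ContinuousOn f' (Set.Icc 0 1)) :
    ((∫ z in Set.Icc (0:ℝ) 1, f z ∂μ.toJordanDecomposition.posPart)
        - ∫ z in Set.Icc (0:ℝ) 1, f z ∂μ.toJordanDecomposition.negPart) ^ 2
      ≤ M ^ 2 * (Real.tanh 1)⁻¹ *
        ((∫ x in Set.Icc (0:ℝ) 1, f x ^ 2) + ∫ x in Set.Icc (0:ℝ) 1, f' x ^ 2) :=
  stmt_2_general μ M hM f f' hf hf'
end

section
/- The improper integral ∫₀^∞ ( 1 − (2/π)·arctan(y³) ) dy converges and equals 2/√3. -/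
/-!
Integrating by parts, `∫₀^∞ (1 - (2/π) arctan y³) dy = [y (1 - (2/π) arctan y³)]₀^∞ +
(2/π) ∫₀^∞ 3y³/(1 + y⁶) dy`, and the boundary term vanishes since `π/2 - arctan t ≤ 1/t`.
With `u = y²` and `1 + u³ = (1 + u)(u² - u + 1)`, partial fractions give the primitive
`(log (y⁴ - y² + 1) - 2 log (y² + 1))/4 + (√3/2) arctan ((2y² - 1)/√3)` of `3y³/(1 + y⁶)`,
whose increment over `[0, ∞)` is `√3π/4 + √3π/12 = π/√3`.
-/

open MeasureTheory Real Filter Topology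

lemma pow_four_sub_sq_add_one_pos (y : ℝ) : 0 < y ^ 4 - y ^ 2 + 1 := by
  nlinarith [sq_nonneg (y ^ 2 - 1), sq_nonneg y]

noncomputable def rationalPrimitive (y : ℝ) : ℝ :=
  (log (y ^ 4 - y ^ 2 + 1) - 2 * log (y ^ 2 + 1)) / 4 + √3 / 2 * arctan ((2 * y ^ 2 - 1) / √3)

lemma hasDerivAt_rationalPrimitive (y : ℝ) :
    HasDerivAt rationalPrimitive (3 * y ^ 3 / (1 + y ^ 6)) y := by
  have hq := (pow_four_sub_sq_add_one_pos y).ne'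
  have hp : y ^ 2 + 1 ≠ 0 := by positivity
  have h3 : (√3) ^ 2 = 3 := sq_sqrt (by norm_num)
  have hlog₁ := (((hasDerivAt_pow 4 y).fun_sub (hasDerivAt_pow 2 y)).add_const 1).log hq
  have hlog₂ := ((hasDerivAt_pow 2 y).add_const 1).log hp
  have hatan := ((((hasDerivAt_pow 2 y).const_mul 2).sub_const 1).div_const √3).arctan
  refine (((hlog₁.fun_sub (hlog₂.const_mul 2)).div_const 4).fun_add
    (hatan.const_mul (√3 / 2))).congr_deriv ?_
  have h6 : 1 + y ^ 6 = (y ^ 2 + 1) * (y ^ 4 - y ^ 2 + 1) := by ring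
  have hd : 1 + ((2 * y ^ 2 - 1) / √3) ^ 2 = 4 * (y ^ 4 - y ^ 2 + 1) / 3 := by
    rw [div_pow, h3]; ring
  rw [h6, hd]
  -- otherwise `field_simp` reshapes the quartic and no longer sees that it is nonzero
  generalize hQ : y ^ 4 - y ^ 2 + 1 = Q at hq ⊢
  field_simp
  subst hQ
  ring

lemma tendsto_log_quartic_sub_atTop :
    Tendsto (fun y : ℝ => log (y ^ 4 - y ^ 2 + 1) - 2 * log (y ^ 2 + 1)) atTop (𝓝 0) := by
  have hz : Tendsto (fun y : ℝ => (y ^ 2)⁻¹) atTop (𝓝 0) :=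
    (tendsto_pow_atTop two_ne_zero).inv_tendsto_atTop
  have hlim : Tendsto (fun z : ℝ => log ((1 - z + z ^ 2) / (1 + z) ^ 2)) (𝓝 0) (𝓝 0) := by
    have : ContinuousAt (fun z : ℝ => log ((1 - z + z ^ 2) / (1 + z) ^ 2)) 0 := by
      fun_prop (disch := norm_num)
    simpa using this.tendsto
  refine (hlim.comp hz).congr' ?_
  filter_upwards [eventually_ne_atTop 0] with y hy
  simp only [Function.comp_apply]
  have : (1 - (y ^ 2)⁻¹ + ((y ^ 2)⁻¹) ^ 2) / (1 + (y ^ 2)⁻¹) ^ 2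
      = (y ^ 4 - y ^ 2 + 1) / (y ^ 2 + 1) ^ 2 := by
    field_simp
  rw [this, log_div (pow_four_sub_sq_add_one_pos y).ne' (by positivity), log_pow]
  push_cast; ring

lemma tendsto_rationalPrimitive_atTop :
    Tendsto rationalPrimitive atTop (𝓝 (√3 * π / 4)) := by
  have harg : Tendsto (fun y : ℝ => (2 * y ^ 2 - 1) / √3) atTop atTop :=
    (tendsto_atTop_add_const_right _ (-1)
      ((tendsto_pow_atTop two_ne_zero).const_mul_atTop two_pos)).atTop_div_const (by positivity)
  have hatan := (tendsto_arctan_atTop.mono_right nhdsWithin_le_nhds).comp harg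
  convert (tendsto_log_quartic_sub_atTop.div_const 4).add (hatan.const_mul (√3 / 2)) using 2
  · simp [rationalPrimitive, sub_eq_add_neg]
  · ring

lemma rationalPrimitive_zero : rationalPrimitive 0 = -(√3 * π / 12) := by
  simp [rationalPrimitive, neg_div, arctan_neg]
  ring

lemma arctan_le_self {x : ℝ} (hx : 0 ≤ x) : arctan x ≤ x := by
  simpa using le_tan (arctan_nonneg.2 hx) (arctan_lt_pi_div_two x)

lemma pi_div_two_sub_arctan_le_inv {x : ℝ} (hx : 0 < x) : π / 2 - arctan x ≤ x⁻¹ := by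
  rw [← arctan_inv_of_pos hx]
  exact arctan_le_self (inv_nonneg.2 hx.le)

lemma tendsto_mul_pi_div_two_sub_arctan_pow_atTop {n : ℕ} (hn : 2 ≤ n) :
    Tendsto (fun y : ℝ => y * (π / 2 - arctan (y ^ n))) atTop (𝓝 0) := by
  obtain ⟨m, rfl⟩ := Nat.exists_eq_add_of_le' hn
  refine squeeze_zero' ?_ ?_ (tendsto_pow_atTop (n := m + 1) m.succ_ne_zero).inv_tendsto_atTop
  · filter_upwards [eventually_gt_atTop 0] with y hy
    exact mul_nonneg hy.le (sub_nonneg.2 (arctan_lt_pi_div_two _).le)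
  · filter_upwards [eventually_gt_atTop 0] with y hy
    calc y * (π / 2 - arctan (y ^ (m + 2))) ≤ y * (y ^ (m + 2))⁻¹ :=
          mul_le_mul_of_nonneg_left (pi_div_two_sub_arctan_le_inv (by positivity)) hy.le
      _ = (y ^ (m + 1))⁻¹ := by field_simp; ring

lemma one_sub_two_div_pi_mul_arctan_nonneg (x : ℝ) : 0 ≤ 1 - 2 / π * arctan x := by
  rw [sub_nonneg, ← le_div_iff₀' (by positivity), div_div_eq_mul_div, one_mul]
  exact (arctan_lt_pi_div_two x).le

noncomputable def tailPrimitive (y : ℝ) : ℝ :=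
  y * (1 - 2 / π * arctan (y ^ 3)) + 2 / π * rationalPrimitive y

lemma hasDerivAt_tailPrimitive (y : ℝ) :
    HasDerivAt tailPrimitive (1 - 2 / π * arctan (y ^ 3)) y := by
  have hf := (((hasDerivAt_pow 3 y).arctan).const_mul (2 / π)).const_sub 1
  refine ((hasDerivAt_id' y).fun_mul hf |>.fun_add
    ((hasDerivAt_rationalPrimitive y).const_mul (2 / π))).congr_deriv ?_
  have : 1 + (y ^ 3) ^ 2 ≠ 0 := by positivity
  field_simp
  ring

lemma tendsto_tailPrimitive_atTop : Tendsto tailPrimitive atTop (𝓝 (√3 / 2)) := by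
  have hboundary := tendsto_mul_pi_div_two_sub_arctan_pow_atTop (n := 3) (by norm_num)
  convert (hboundary.const_mul (2 / π)).add (tendsto_rationalPrimitive_atTop.const_mul (2 / π))
    using 2 with y
  · simp only [tailPrimitive]
    field_simp
  · field_simp
    ring

lemma tailPrimitive_zero : tailPrimitive 0 = -(√3 / 6) := by
  simp only [tailPrimitive, rationalPrimitive_zero, zero_mul, zero_add]
  field_simp
  ring

/-- The improper integral `∫₀^∞ (1 − (2/π) arctan(y³)) dy` converges
(the integrand is Lebesgue integrable on `[0,∞)`) and equals `2/√3`. -/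
theorem stmt_12 :
    IntegrableOn (fun y : ℝ => 1 - 2 / Real.pi * Real.arctan (y ^ 3)) (Set.Ici 0) ∧
    ∫ y in Set.Ici (0:ℝ), (1 - 2 / Real.pi * Real.arctan (y ^ 3)) = 2 / Real.sqrt 3 := by
  have hderiv : ∀ x ∈ Set.Ici (0:ℝ), HasDerivAt tailPrimitive (1 - 2 / π * arctan (x ^ 3)) x :=
    fun x _ => hasDerivAt_tailPrimitive x
  have hnonneg : ∀ x ∈ Set.Ioi (0:ℝ), 0 ≤ 1 - 2 / π * arctan (x ^ 3) :=
    fun x _ => one_sub_two_div_pi_mul_arctan_nonneg _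
  refine ⟨(integrableOn_Ici_iff_integrableOn_Ioi).2 <|
    integrableOn_Ioi_deriv_of_nonneg' hderiv hnonneg tendsto_tailPrimitive_atTop, ?_⟩
  rw [integral_Ici_eq_integral_Ioi, integral_Ioi_of_hasDerivAt_of_nonneg' hderiv hnonneg
    tendsto_tailPrimitive_atTop, tailPrimitive_zero]
  have h3 : √3 * √3 = 3 := mul_self_sqrt (by norm_num)
  field_simp
  linarith
end
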